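/- Completeness of the revolving-door generator: for all N K k : ℕ with k ≤ K and k ≤ N, let cs be the k-th entry of kcombsRevol K ((List.range' 1 N).reverse). Then the list cs.map List.toFinset has no duplicate entries, cs has length Nat.choose N k, and the finset of entries of cs.map List.toFinset equals Finset.powersetCard k (Finset.Icc 1 N); that is, the generator produces every k-element subset of {1, …, N} exactly once. -/

import Mathlib

variable {α : Type*}

/-- One step of the revolving-door K-combination generator (for `css` of length K+1). -/
def forRevol (x : α) (css : List (List (List α))) : List (List (List α)) :=
  [[[]]] ++ (List.range (css.length - 1)).map
    (fun i => css.getD (i + 1) [] ++ ((css.getD i []).map (· ++ [x])).reverse)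

/-- Revolving-door K-combination generator. -/
def kcombsRevol (K : ℕ) : List α → List (List (List α))
  | [] => [[[]]] ++ List.replicate K []
  | x :: xs => forRevol x (kcombsRevol K xs)

lemma length_kcombsRevol (K : ℕ) (l : List α) : (kcombsRevol K l).length = K + 1 := by
  induction l with
  | nil => simp [kcombsRevol]
  | cons x xs ih => simp [kcombsRevol, forRevol, ih]

lemma list_toFinset_map {β : Type*} [DecidableEq α] [DecidableEq β] (l : List α) (f : α → β) :
    (l.map f).toFinset = Finset.image f l.toFinset := by
  induction l with
  | nil => simp
  | cons x xs ih => simp [ih]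

lemma kcombsRevol_key (K N : ℕ) : ∀ k ≤ K,
    (((kcombsRevol K ((List.range' 1 N).reverse)).getD k []).map List.toFinset).Nodup ∧
    ((kcombsRevol K ((List.range' 1 N).reverse)).getD k []).length = N.choose k ∧
    (((kcombsRevol K ((List.range' 1 N).reverse)).getD k []).map List.toFinset).toFinset
      = Finset.powersetCard k (Finset.Icc 1 N) := by
  induction N with
  | zero =>
    intro k hk
    match k with
    | 0 => simp [kcombsRevol]
    | k + 1 =>
      have : (List.replicate K ([] : List (List ℕ))).getD k [] = [] := by
        rcases lt_or_ge k K with h | h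
        · rw [List.getD_eq_getElem _ _ (by simpa using h)]; simp
        · rw [List.getD_eq_default _ _ (by simpa using h)]
      refine ⟨by simp [kcombsRevol, this], by simp [kcombsRevol, this], ?_⟩
      simp only [List.range'_zero, List.reverse_nil, kcombsRevol, List.cons_append, List.nil_append, List.getD_cons_succ, this,
        List.map_nil, List.toFinset_nil]
      exact (Finset.powersetCard_eq_empty.mpr (by simp)).symm
  | succ N ih =>
    intro k hk
    have hrev : (List.range' 1 (N + 1)).reverse = (N + 1) :: (List.range' 1 N).reverse := by
      rw [List.range'_concat]; simp [Nat.add_comm]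
    rw [hrev]
    set old := kcombsRevol K ((List.range' 1 N).reverse) with hold
    have hlen : old.length = K + 1 := length_kcombsRevol K _
    have hstep : kcombsRevol K ((N + 1) :: (List.range' 1 N).reverse) = forRevol (N + 1) old := rfl
    rw [hstep]
    have hIcc : Finset.Icc 1 (N + 1) = insert (N + 1) (Finset.Icc 1 N) := by
      ext x; simp [Finset.mem_Icc]; omega
    have hnotmem : (N + 1) ∉ Finset.Icc 1 N := by simp
    match k with
    | 0 =>
      simp [forRevol, hIcc, Finset.powersetCard_zero]
    | j + 1 =>
      have hgd : (forRevol (N + 1) old).getD (j + 1) []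
          = old.getD (j + 1) [] ++ ((old.getD j []).map (· ++ [N + 1])).reverse := by
        have hj : j < K := by omega
        simp only [forRevol, hlen, Nat.add_sub_cancel, List.cons_append, List.nil_append,
          List.getD_cons_succ]
        rw [List.getD_eq_getElem _ _ (by simpa using hj)]
        simp
      rw [hgd]
      obtain ⟨hA1, hA2, hA3⟩ := ih (j + 1) hk
      obtain ⟨hB1, hB2, hB3⟩ := ih j (by omega)
      set A := old.getD (j + 1) [] with hA
      set B := old.getD j [] with hB
      -- map toFinset over the second block
      have hmap2 : (B.map (· ++ [N + 1])).map List.toFinset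
          = (B.map List.toFinset).map (insert (N + 1)) := by
        simp only [List.map_map]
        apply List.map_congr_left
        intro l _
        simp only [Function.comp_apply]
        rw [List.toFinset_append, Finset.union_comm]
        simp
      -- every finset in B.map toFinset avoids N+1
      have hBsub : ∀ s ∈ B.map List.toFinset, (N + 1) ∉ s := by
        intro s hs
        have : s ∈ (B.map List.toFinset).toFinset := by simpa using hs
        rw [hB3] at this
        have := Finset.mem_powersetCard.mp this
        exact fun hmem => hnotmem (this.1 hmem)
      have hAsub : ∀ s ∈ A.map List.toFinset, (N + 1) ∉ s := by
        intro s hs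
        have : s ∈ (A.map List.toFinset).toFinset := by simpa using hs
        rw [hA3] at this
        have := Finset.mem_powersetCard.mp this
        exact fun hmem => hnotmem (this.1 hmem)
      have hmapeq : (A ++ (B.map (· ++ [N + 1])).reverse).map List.toFinset
          = A.map List.toFinset ++ ((B.map List.toFinset).map (insert (N + 1))).reverse := by
        rw [List.map_append, List.map_reverse, hmap2]
      rw [hmapeq]
      have h2nodup : ((B.map List.toFinset).map (insert (N + 1))).Nodup := by
        apply List.Nodup.map_on _ hB1
        intro s hs t ht hst
        have hsn := hBsub s hs
        have htn := hBsub t ht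
        have : (insert (N+1) s).erase (N+1) = (insert (N+1) t).erase (N+1) := by rw [hst]
        rwa [Finset.erase_insert hsn, Finset.erase_insert htn] at this
      refine ⟨?_, ?_, ?_⟩
      · apply List.Nodup.append hA1 (List.nodup_reverse.mpr h2nodup)
        intro s hs hs'
        have : (N + 1) ∈ s := by
          rw [List.mem_reverse] at hs'
          obtain ⟨t, _, rfl⟩ := List.mem_map.mp hs'
          exact Finset.mem_insert_self _ _
        exact hAsub s hs this
      · simp only [List.length_append, List.length_reverse, List.length_map, hA2, hB2]
        rw [Nat.choose_succ_succ, Nat.succ_eq_add_one]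
        omega
      · rw [List.toFinset_append, hA3, List.toFinset_reverse,
          list_toFinset_map, hB3, hIcc, Finset.powersetCard_succ_insert hnotmem]

/-- Completeness of the revolving-door generator: it produces every k-element
subset of {1, …, N} exactly once. -/
theorem kcombsRevol_complete (N K k : ℕ) (hkK : k ≤ K) (hkN : k ≤ N) :
    ∀ cs : List (List ℕ),
      cs = (kcombsRevol K ((List.range' 1 N).reverse)).getD k [] →
      ((cs.map List.toFinset).Nodup ∧
        cs.length = Nat.choose N k ∧
        (cs.map List.toFinset).toFinset = Finset.powersetCard k (Finset.Icc 1 N)) := by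
  intro cs hcs
  subst hcs
  exact kcombsRevol_key K N k hkK
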